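/- A Π2 sentence of the language {<², ≈²} (two binary relation symbols) is true in every nonempty model of a linear order and an equivalence if and only if it is true in every finite nonempty model of a linear order and an equivalence. That is, the Π2-theory of the class LEq of all nonempty models of a linear order and an equivalence coincides with the Π2-theory of the class LEq_fin of all finite nonempty models of a linear order and an equivalence. -/

import Mathlib

open FirstOrder FirstOrder.Language

universe u

/-- A bounded formula is Σ₁ if it consists of a (possibly empty) block of existential
quantifiers followed by a quantifier-free formula. -/
inductive IsSigma1 {L : Language} {α : Type*} : {n : ℕ} → L.BoundedFormula α n → Prop
  | of_isQF {n : ℕ} {φ : L.BoundedFormula α n} : φ.IsQF → IsSigma1 φ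
  | ex {n : ℕ} {φ : L.BoundedFormula α (n + 1)} : IsSigma1 φ → IsSigma1 φ.ex

/-- A bounded formula is Π₂ if it has the form ∀x₁…∀xₘ ∃y₁…∃yₖ ψ with ψ quantifier-free. -/
inductive IsPi2 {L : Language} {α : Type*} : {n : ℕ} → L.BoundedFormula α n → Prop
  | of_isSigma1 {n : ℕ} {φ : L.BoundedFormula α n} : IsSigma1 φ → IsPi2 φ
  | all {n : ℕ} {φ : L.BoundedFormula α (n + 1)} : IsPi2 φ → IsPi2 φ.all

/-- Relation symbols of the language of a linear order and an equivalence: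
two binary symbols < and ≈. -/
inductive LERel : ℕ → Type
  | lt : LERel 2
  | equiv : LERel 2

/-- The language {<², ≈²} of a linear order and an equivalence (purely relational). -/
def σL : Language := ⟨fun _ => Empty, LERel⟩

/-- A σL-structure is a model of a linear order and an equivalence when < is interpreted as
a strict linear order and ≈ as an equivalence relation. -/
def IsLEq (M : Type u) [σL.Structure M] : Prop :=
  (∀ x : M, ¬ Structure.RelMap (L := σL) LERel.lt ![x, x]) ∧
  (∀ x y z : M, Structure.RelMap (L := σL) LERel.lt ![x, y] →
    Structure.RelMap (L := σL) LERel.lt ![y, z] →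
    Structure.RelMap (L := σL) LERel.lt ![x, z]) ∧
  (∀ x y : M, Structure.RelMap (L := σL) LERel.lt ![x, y] ∨ x = y ∨
    Structure.RelMap (L := σL) LERel.lt ![y, x]) ∧
  Equivalence (fun x y : M => Structure.RelMap (L := σL) LERel.equiv ![x, y])

instance : σL.IsRelational := fun _ => inferInstanceAs (IsEmpty Empty)

/-- Σ₁ formulas are preserved upward along embeddings. -/
lemma IsSigma1.realize_embedding {L : Language} {α : Type*} {n : ℕ}
    {φ : L.BoundedFormula α n} (h : IsSigma1 φ) {M N : Type*} [L.Structure M] [L.Structure N]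
    (f : M ↪[L] N) {v : α → M} {xs : Fin n → M} :
    φ.Realize v xs → φ.Realize (f ∘ v) (f ∘ xs) := by
  induction h with
  | of_isQF hQF => simp [hQF.realize_embedding f]
  | ex _ ih =>
    simp only [BoundedFormula.realize_ex]
    refine fun ⟨a, ha⟩ => ⟨f a, ?_⟩
    rw [← Fin.comp_snoc]
    exact ih ha

/-- Binary relations on a substructure are computed in the ambient structure. -/
lemma relMap_substructure {M : Type u} [σL.Structure M] (S : σL.Substructure M)
    (r : σL.Relations 2) (x y : S) :
    Structure.RelMap (L := σL) r ![x, y] ↔ Structure.RelMap (L := σL) r ![(x : M), (y : M)] := by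
  have e : (⇑S.subtype ∘ ![x, y]) = ![(x : M), (y : M)] := by
    funext i; fin_cases i <;> rfl
  rw [← e]
  exact (S.subtype.map_rel' r ![x, y]).symm

lemma isLEq_substructure {M : Type u} [σL.Structure M] (hM : IsLEq M)
    (S : σL.Substructure M) : IsLEq (S : Type u) := by
  obtain ⟨h1, h2, h3, h4⟩ := hM
  refine ⟨fun x => ?_, fun x y z hxy hyz => ?_, fun x y => ?_, ?_, ?_, ?_⟩
  · erw [relMap_substructure]; exact h1 x
  · erw [relMap_substructure] at *
    exact h2 x y z hxy hyz
  · erw [relMap_substructure, relMap_substructure]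
    rcases h3 (x : M) (y : M) with h | h | h
    · exact Or.inl h
    · exact Or.inr (Or.inl (Subtype.ext h))
    · exact Or.inr (Or.inr h)
  · intro x; erw [relMap_substructure]; exact h4.refl (x : M)
  · intro x y h; erw [relMap_substructure] at *; exact h4.symm h
  · intro x y z hxy hyz; erw [relMap_substructure] at *; exact h4.trans hxy hyz

/-- Key lemma: if a Π₂ formula fails in `M` at a tuple `xs`, it fails at a corresponding
tuple in some finite substructure of `M` containing any prescribed point `m₀`. -/
lemma pi2_fails_in_finite_substructure {n : ℕ} {φ : σL.BoundedFormula Empty n}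
    (hφ : IsPi2 φ) : ∀ (M : Type u) [σL.Structure M] (m₀ : M) (xs : Fin n → M),
    ¬ φ.Realize Empty.elim xs →
    ∃ S : σL.Substructure M, (S : Set M).Finite ∧ m₀ ∈ S ∧
      ∃ ys : Fin n → S, (∀ i, (ys i : M) = xs i) ∧ ¬ φ.Realize Empty.elim ys := by
  induction hφ with
  | of_isSigma1 hσ =>
    intro M _ m₀ xs hreal
    refine ⟨Substructure.closure σL (insert m₀ (Set.range xs)), ?_, ?_, fun i =>
      ⟨xs i, Substructure.subset_closure (Set.mem_insert_of_mem _ ⟨i, rfl⟩)⟩, fun i => rfl, ?_⟩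
    · rw [Substructure.closure_eq_of_isRelational]
      exact (Set.finite_range xs).insert m₀
    · exact Substructure.subset_closure (Set.mem_insert _ _)
    · intro h
      apply hreal
      have h2 := hσ.realize_embedding (Substructure.subtype _) h
      have hE : (⇑(Substructure.closure σL (insert m₀ (Set.range xs))).subtype ∘ Empty.elim)
          = (Empty.elim : Empty → M) := funext fun a => a.elim
      rw [hE] at h2
      exact h2
  | all _ ih =>
    intro M _ m₀ xs hreal
    rw [BoundedFormula.realize_all] at hreal
    push_neg at hreal
    obtain ⟨a, ha⟩ := hreal
    obtain ⟨S, hSfin, hm₀, ys, hys, hreal'⟩ := ih M m₀ (Fin.snoc xs a) ha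
    refine ⟨S, hSfin, hm₀, fun i => ys i.castSucc, fun i => by
      rw [hys i.castSucc, Fin.snoc_castSucc], ?_⟩
    rw [BoundedFormula.realize_all]
    push_neg
    refine ⟨ys (Fin.last _), ?_⟩
    have e : Fin.snoc (fun i => ys i.castSucc) (ys (Fin.last _)) = ys := by
      funext i
      refine Fin.lastCases ?_ (fun j => ?_) i <;> simp
    rw [e]
    exact hreal'

/-- A Π₂ sentence of {<², ≈²} is true in every nonempty model of a linear order and an
equivalence iff it is true in every finite nonempty such model: the Π₂-theory of LEq
coincides with the Π₂-theory of LEq_fin. -/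
theorem pi2_theory_lEq_eq_pi2_theory_lEqFin (φ : σL.Sentence) (hφ : IsPi2 φ) :
    (∀ (M : Type u) [σL.Structure M] [Nonempty M], IsLEq M → M ⊨ φ) ↔
      (∀ (M : Type u) [σL.Structure M] [Nonempty M] [Finite M], IsLEq M → M ⊨ φ) := by
  constructor
  · intro h M _ _ _ hM
    exact h M hM
  · intro h M _ _ hM
    by_contra hreal
    have hd : (Empty.elim : Empty → M) = default := Subsingleton.elim _ _
    have hreal' : ¬ BoundedFormula.Realize (M := M) φ Empty.elim (default : Fin 0 → M) := by
      rw [hd]; exact hreal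
    obtain ⟨m₀⟩ := ‹Nonempty M›
    obtain ⟨S, hSfin, hm₀, ys, _, hys⟩ :=
      pi2_fails_in_finite_substructure hφ M m₀ default hreal'
    haveI : Nonempty S := ⟨⟨m₀, hm₀⟩⟩
    haveI : Finite S := hSfin.to_subtype
    have hmod := h S (isLEq_substructure hM S)
    apply hys
    have hd2 : (Empty.elim : Empty → S) = default := Subsingleton.elim _ _
    have hy : ys = default := Subsingleton.elim _ _
    rw [hd2, hy]
    exact hmod
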